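/- Let G be a perfect topological group and H a closed normal subgroup of G which is a topological direct product of topologically simple topological groups. If G/H is topologically normally generated by a single element, then so is G. -/

import Mathlib

/-!
Pick `g` mapping to a normal generator of `G ⧸ H`, let `c ∈ H`, and let `M` be the closed normal
subgroup generated by `m = g c`. For each factor, `M ∩ Sᵢ` is closed and normal in `Sᵢ`, so it is
trivial or everything. Suppose it is trivial and `Sᵢ` is not abelian, so has trivial centre. For
`u ∈ Sᵢ` the commutator `[m, u]` lies in `M ∩ H`, and its commutators with `Sᵢ` lie in `M ∩ Sᵢ`,
so its `i`-th coordinate is central, hence trivial. This says that `s ↦ (g s g⁻¹)ᵢ` is conjugation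
by `cᵢ⁻¹` on `Sᵢ`, which a suitable choice of `cᵢ` rules out. Hence `M` contains every
`[Sᵢ, Sᵢ]` and, being closed, `[H, H]`. As `g ∈ MH`, the subgroup `MH` is dense; its commutators
lie in `M`, hence so do those of `G`. Since `[G, G]` is dense, `M = G`.
-/

open Filter Topology
open scoped commutatorElement

theorem Subgroup.isClosed_center (G : Type*) [Group G] [TopologicalSpace G]
    [IsTopologicalGroup G] [T2Space G] : IsClosed (center G : Set G) := by
  rw [coe_center, ← Set.centralizer_univ]
  exact Set.isClosed_centralizer _

section

variable {G : Type*} [Group G]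

theorem Subgroup.commutator_sup_le_of_commutator_le {N H : Subgroup G} [N.Normal]
    (hH : ⁅H, H⁆ ≤ N) : ⁅N ⊔ H, N ⊔ H⁆ ≤ N := by
  set π := QuotientGroup.mk' N
  have hmk : ∀ x ∈ N ⊔ H, ∃ h ∈ H, π h = π x := by
    intro x hx
    have hπx : π x ∈ (N ⊔ H).map π := mem_map_of_mem _ hx
    rwa [map_sup, QuotientGroup.map_mk'_self, bot_sup_eq] at hπx
  rw [commutator_le]
  intro a ha b hb
  obtain ⟨h, hh, hha⟩ := hmk a ha
  obtain ⟨h', hh', hhb⟩ := hmk b hb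
  rw [← QuotientGroup.ker_mk' N, MonoidHom.mem_ker, map_commutatorElement, ← hha, ← hhb,
    ← map_commutatorElement, ← MonoidHom.mem_ker, QuotientGroup.ker_mk']
  exact hH (commutator_mem_commutator hh hh')

variable [TopologicalSpace G] [IsTopologicalGroup G]

theorem Subgroup.commutator_le_of_topologicalClosure_eq_top {N K : Subgroup G}
    (hN : IsClosed (N : Set G)) (hK : K.topologicalClosure = ⊤) (hKN : ⁅K, K⁆ ≤ N) :
    _root_.commutator G ≤ N := by
  have hC : IsClosed {p : G × G | ⁅p.1, p.2⁆ ∈ N} :=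
    hN.preimage (by simp only [commutatorElement_def]; fun_prop)
  have hKK : (K : Set G) ×ˢ (K : Set G) ⊆ {p : G × G | ⁅p.1, p.2⁆ ∈ N} :=
    fun p hp => hKN (commutator_mem_commutator hp.1 hp.2)
  have hdense : _root_.closure ((K : Set G) ×ˢ (K : Set G)) = Set.univ := by
    rw [closure_prod_eq, ← topologicalClosure_coe, hK, coe_top, Set.univ_prod_univ]
  rw [_root_.commutator_def, commutator_le]
  intro a _ b _
  exact hC.closure_subset_iff.2 hKK (hdense ▸ Set.mem_univ (a, b))

theorem Subgroup.eq_top_of_topologicalClosure_normalClosure_mk_eq_top {H N : Subgroup G}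
    [H.Normal] [N.Normal] (hN : IsClosed (N : Set G)) (hHN : H ≤ N) {g : G} (hg : g ∈ N)
    (hq : (normalClosure {(g : G ⧸ H)}).topologicalClosure = ⊤) : N = ⊤ := by
  set π := QuotientGroup.mk' H
  have hNπ : (N.map π).comap π = N := comap_map_eq_self (by rwa [QuotientGroup.ker_mk'])
  have hclosed : IsClosed (N.map π : Set (G ⧸ H)) := by
    rw [← (QuotientGroup.isQuotientMap_mk H).isClosed_preimage]
    change IsClosed ((N.map π).comap π : Set G)
    rwa [hNπ]
  have hmapN : N.map π = ⊤ := by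
    rw [eq_top_iff, ← hq]
    have := ‹N.Normal›.map π (QuotientGroup.mk'_surjective H)
    exact topologicalClosure_minimal _
      (normalClosure_le_normal (Set.singleton_subset_iff.2 (mem_map_of_mem π hg))) hclosed
  rw [← hNπ, hmapN, comap_top]

end

section Pi

variable {ι : Type*} {S : ι → Type*} [DecidableEq ι]

theorem Pi.mem_of_isClosed_of_mulSingle_mem [∀ i, MulOneClass (S i)]
    [∀ i, TopologicalSpace (S i)] {T : Type*} [SetLike T (∀ i, S i)]
    [SubmonoidClass T (∀ i, S i)] {N : T} (hN : IsClosed (N : Set (∀ i, S i))) (p : ∀ i, S i)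
    (h : ∀ i, Pi.mulSingle i (p i) ∈ N) : p ∈ N := by
  have hfin : ∀ F : Finset ι, F.piecewise p 1 ∈ N := fun F =>
    Submonoid.pi_mem_of_mulSingle_mem_aux F _ (fun i hi => by simp [hi])
      (fun i hi => by simpa [hi] using h i)
  have hlim : Tendsto (fun F : Finset ι => F.piecewise p 1) atTop (𝓝 p) :=
    tendsto_pi_nhds.2 fun i => tendsto_const_nhds.congr' <|
      (eventually_ge_atTop {i}).mono fun F hF => by
        simp [hF (Finset.mem_singleton_self i)]
  exact hN.mem_of_tendsto hlim (Eventually.of_forall hfin)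

variable [∀ i, Group (S i)]

theorem Pi.commutatorElement_mulSingle (p : ∀ i, S i) (i : ι) (t : S i) :
    ⁅p, Pi.mulSingle i t⁆ = Pi.mulSingle i ⁅p i, t⁆ := by
  ext j
  by_cases hj : j = i
  · subst hj; simp [commutatorElement_def]
  · simp [commutatorElement_def, hj]

theorem Pi.commutator_le_of_mulSingle_commutator_mem [∀ i, TopologicalSpace (S i)]
    {N : Subgroup (∀ i, S i)} (hN : IsClosed (N : Set (∀ i, S i)))
    (h : ∀ i (s t : S i), Pi.mulSingle i ⁅s, t⁆ ∈ N) : commutator (∀ i, S i) ≤ N := by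
  rw [commutator_def, Subgroup.commutator_le]
  exact fun p _ q _ => Pi.mem_of_isClosed_of_mulSingle_mem hN _ fun i => h i (p i) (q i)

theorem Pi.apply_mem_center_of_comap_mulSingle_eq_bot {N : Subgroup (∀ i, S i)} [N.Normal]
    {i : ι} (hN : N.comap (MonoidHom.mulSingle S i) = ⊥) {p : ∀ i, S i} (hp : p ∈ N) :
    p i ∈ Subgroup.center (S i) := by
  rw [Subgroup.mem_center_iff]
  intro t
  have hpt : Pi.mulSingle i ⁅p i, t⁆ ∈ N := by
    rw [← Pi.commutatorElement_mulSingle]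
    exact Subgroup.commutator_le_left N ⊤ (Subgroup.commutator_mem_commutator hp trivial)
  have hpt' : ⁅p i, t⁆ ∈ N.comap (MonoidHom.mulSingle S i) := hpt
  rw [hN, Subgroup.mem_bot, commutatorElement_eq_one_iff_mul_comm] at hpt'
  exact hpt'.symm

end Pi

theorem exists_forall_eq_conj_imp_commute {S : Type*} [Group S] (θ : S → S) :
    ∃ c : S, (∀ s, θ s = c⁻¹ * s * c) → ∀ a b : S, Commute a b := by
  by_contra! h
  obtain ⟨a, b, hab⟩ := (h 1).2
  have hconj : b⁻¹ * a * b = a := by rw [← (h b).1 a, (h 1).1 a]; group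
  apply hab
  calc a * b = b * (b⁻¹ * a * b) := by group
    _ = b * a := by rw [hconj]

section Core

variable {G : Type*} [Group G] {ι : Type*} {S : ι → Type*} [∀ i, Group (S i)] [DecidableEq ι]
  (ψ : (∀ i, S i) →* G) {M : Subgroup G} [M.Normal] {g : G} {c : ∀ i, S i}
  {α : (∀ i, S i) → ∀ i, S i}

theorem apply_mulSingle_eq_conj_of_comap_eq_bot (hm : g * ψ c ∈ M)
    (hα : ∀ p, ψ (α p) = g * ψ p * g⁻¹) {i : ι}
    (hT : (M.comap ψ).comap (MonoidHom.mulSingle S i) = ⊥) (hZ : Subgroup.center (S i) = ⊥)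
    (s : S i) : α (Pi.mulSingle i s) i = (c i)⁻¹ * s * c i := by
  set u := Pi.mulSingle i ((c i)⁻¹ * s * c i)
  have hcu : c * u * c⁻¹ = Pi.mulSingle i s := by
    ext j
    by_cases hj : j = i
    · subst hj; simp [u, mul_assoc]
    · simp [u, hj]
  have hmem : α (Pi.mulSingle i s) * u⁻¹ ∈ M.comap ψ := by
    have hcomm : ψ (α (Pi.mulSingle i s) * u⁻¹) = ⁅g * ψ c, ψ u⁆ := by
      rw [map_mul, hα, ← hcu, map_inv, map_mul, map_mul, map_inv, commutatorElement_def]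
      group
    rw [Subgroup.mem_comap, hcomm]
    exact Subgroup.commutator_le_left M ⊤ (Subgroup.commutator_mem_commutator hm trivial)
  have hcentral := Pi.apply_mem_center_of_comap_mulSingle_eq_bot hT hmem
  rw [hZ, Subgroup.mem_bot, Pi.mul_apply, Pi.inv_apply, mul_inv_eq_one] at hcentral
  simpa [u] using hcentral

theorem mulSingle_commutator_mem (hm : g * ψ c ∈ M) (hα : ∀ p, ψ (α p) = g * ψ p * g⁻¹)
    {i : ι} (hT : (M.comap ψ).comap (MonoidHom.mulSingle S i) = ⊥ ∨
      (M.comap ψ).comap (MonoidHom.mulSingle S i) = ⊤)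
    (hZ : Subgroup.center (S i) = ⊥ ∨ Subgroup.center (S i) = ⊤)
    (hc : (∀ s, α (Pi.mulSingle i s) i = (c i)⁻¹ * s * c i) → ∀ a b : S i, Commute a b)
    (s t : S i) : Pi.mulSingle i ⁅s, t⁆ ∈ M.comap ψ := by
  rcases hT with hT | hT
  · have hcomm : ∀ a b : S i, Commute a b := by
      rcases hZ with hZ | hZ
      · exact hc (apply_mulSingle_eq_conj_of_comap_eq_bot ψ hm hα hT hZ)
      · exact fun a b => Subgroup.mem_center_iff.1 (hZ ▸ Subgroup.mem_top b) a
    rw [commutatorElement_eq_one_iff_commute.2 (hcomm s t), Pi.mulSingle_one]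
    exact one_mem _
  · exact (hT ▸ Subgroup.mem_top ⁅s, t⁆ : ⁅s, t⁆ ∈ (M.comap ψ).comap (MonoidHom.mulSingle S i))

end Core

theorem normally_generated_of_quotient_by_product_of_simple_general
    {G : Type*} [Group G] [TopologicalSpace G] [IsTopologicalGroup G]
    (hperf : Dense ((commutator G : Subgroup G) : Set G))
    (H : Subgroup G) [H.Normal]
    {ι : Type*} {S : ι → Type*} [∀ i, Group (S i)] [∀ i, TopologicalSpace (S i)]
    [∀ i, IsTopologicalGroup (S i)] [∀ i, T2Space (S i)]
    (hsimple : ∀ i (N : Subgroup (S i)), N.Normal → IsClosed (N : Set (S i)) →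
      N = ⊥ ∨ N = ⊤)
    (φ : (∀ i, S i) ≃* H) (hφ : Continuous φ)
    (hq : ∃ x : G ⧸ H, (Subgroup.normalClosure {x}).topologicalClosure = ⊤) :
    ∃ g : G, (Subgroup.normalClosure {g}).topologicalClosure = ⊤ := by
  classical
  obtain ⟨x, hx⟩ := hq
  obtain ⟨g, rfl⟩ := QuotientGroup.mk_surjective x
  set ψ : (∀ i, S i) →* G := H.subtype.comp φ.toMonoidHom
  have hψ : Continuous ψ := continuous_subtype_val.comp hφ
  have hrange : ψ.range = H :=
    le_antisymm (fun _ ⟨p, hp⟩ => hp ▸ (φ p).2) fun y hy => ⟨φ.symm ⟨y, hy⟩, by simp [ψ]⟩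
  set α : (∀ i, S i) → ∀ i, S i := fun p => φ.symm (MulAut.conjNormal g (φ p))
  have hα : ∀ p, ψ (α p) = g * ψ p * g⁻¹ := fun p => by simp [ψ, α, MulAut.conjNormal_apply]
  choose c hc using fun i => exists_forall_eq_conj_imp_commute fun s => α (Pi.mulSingle i s) i
  set M := (Subgroup.normalClosure {g * ψ c}).topologicalClosure
  have : M.Normal := Subgroup.is_normal_topologicalClosure _
  have hMc : IsClosed (M : Set G) := Subgroup.isClosed_topologicalClosure _
  have hm : g * ψ c ∈ M := Subgroup.le_topologicalClosure _ (Subgroup.subset_normalClosure rfl)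
  have hHH : ⁅H, H⁆ ≤ M := by
    rw [← hrange, MonoidHom.range_eq_map, ← Subgroup.map_commutator, Subgroup.map_le_iff_le_comap]
    refine Pi.commutator_le_of_mulSingle_commutator_mem (hMc.preimage hψ) fun i =>
      mulSingle_commutator_mem ψ hm hα (hsimple i _ ((Subgroup.Normal.comap ‹_› ψ).comap _) ?_)
        (hsimple i _ inferInstance (Subgroup.isClosed_center (S i))) (hc i)
    exact hMc.preimage (hψ.comp (continuous_mulSingle i))
  have hdense : (M ⊔ H).topologicalClosure = ⊤ := by
    have := Subgroup.is_normal_topologicalClosure (M ⊔ H)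
    refine Subgroup.eq_top_of_topologicalClosure_normalClosure_mk_eq_top
      (Subgroup.isClosed_topologicalClosure _)
      (le_sup_right.trans (Subgroup.le_topologicalClosure _))
      (Subgroup.le_topologicalClosure _ ?_) hx
    simpa [ψ] using mul_mem (Subgroup.mem_sup_left hm) (Subgroup.mem_sup_right (inv_mem (φ c).2))
  have hcomm : commutator G ≤ M := Subgroup.commutator_le_of_topologicalClosure_eq_top hMc hdense
    (Subgroup.commutator_sup_le_of_commutator_le hHH)
  exact ⟨g * ψ c, eq_top_iff.2 fun a _ =>
    hMc.closure_subset_iff.2 hcomm (hperf.closure_eq ▸ Set.mem_univ a)⟩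

theorem normally_generated_of_quotient_by_product_of_simple
    {G : Type*} [Group G] [TopologicalSpace G] [IsTopologicalGroup G] [T2Space G]
    (hperf : Dense ((commutator G : Subgroup G) : Set G))
    (H : Subgroup G) [H.Normal] (hHc : IsClosed (H : Set G))
    {ι : Type*} {S : ι → Type*} [∀ i, Group (S i)] [∀ i, TopologicalSpace (S i)]
    [∀ i, IsTopologicalGroup (S i)] [∀ i, T2Space (S i)]
    (hsimple : ∀ i (N : Subgroup (S i)), N.Normal → IsClosed (N : Set (S i)) →
      N = ⊥ ∨ N = ⊤)
    (φ : (∀ i, S i) ≃* H) (hφ : Continuous φ) (hφ' : Continuous φ.symm)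
    (hq : ∃ x : G ⧸ H, (Subgroup.normalClosure {x}).topologicalClosure = ⊤) :
    ∃ g : G, (Subgroup.normalClosure {g}).topologicalClosure = ⊤ :=
  normally_generated_of_quotient_by_product_of_simple_general hperf H hsimple φ hφ hq
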